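/- Suppose the per-class logit adjustments are ℓ_y = log π^train_y − log π^t_y and the trained network satisfies softmax(f_y(x) + ℓ_y) = p^train(y|x) for all x, y, where p^train(y|x) = π^train_y p(x|y)/Σ_{y'} π^train_{y'} p(x|y'). Then softmax(f(x))_y = p^t(y|x) := π^t_y p(x|y)/Σ_{y'} π^t_{y'} p(x|y'). -/
import Mathlib


open Finset in
theorem tla_gives_target_posterior {K : ℕ} {X : Type*}
    (πtr πt : Fin K → ℝ) (hπtr : ∀ y, 0 < πtr y) (hπt : ∀ y, 0 < πt y)
    (hπtrs : ∑ y, πtr y = 1) (hπts : ∑ y, πt y = 1)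
    (p : X → Fin K → ℝ) (hp : ∀ x y, 0 < p x y)
    (f : Fin K → X → ℝ)
    (hf : ∀ x y,
      Real.exp (f y x + (Real.log (πtr y) - Real.log (πt y)))
          / (∑ y', Real.exp (f y' x + (Real.log (πtr y') - Real.log (πt y'))))
        = πtr y * p x y / ∑ y', πtr y' * p x y') :
    ∀ x y, Real.exp (f y x) / (∑ y', Real.exp (f y' x))
        = πt y * p x y / ∑ y', πt y' * p x y' := by
  intro x y
  set S := ∑ y', Real.exp (f y' x + (Real.log (πtr y') - Real.log (πt y'))) with hSdef
  set T := ∑ y', πtr y' * p x y' with hTdef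
  have hSpos : 0 < S := Finset.sum_pos (fun i _ => Real.exp_pos _) ⟨y, Finset.mem_univ y⟩
  have hTpos : 0 < T := Finset.sum_pos (fun i _ => mul_pos (hπtr i) (hp x i)) ⟨y, Finset.mem_univ y⟩
  have key : ∀ z, Real.exp (f z x) = (S / T) * (πt z * p x z) := by
    intro z
    have h := hf x z
    rw [← hSdef, ← hTdef] at h
    have hexp : Real.exp (f z x + (Real.log (πtr z) - Real.log (πt z)))
        = Real.exp (f z x) * πtr z / πt z := by
      rw [Real.exp_add, Real.exp_sub, Real.exp_log (hπtr z), Real.exp_log (hπt z)]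
      ring
    rw [hexp, div_eq_div_iff hSpos.ne' hTpos.ne'] at h
    have h2 : Real.exp (f z x) * πtr z * T = πtr z * p x z * S * πt z := by
      rw [div_mul_eq_mul_div, div_eq_iff (hπt z).ne'] at h
      linear_combination h
    have h3 : Real.exp (f z x) * T = p x z * S * πt z := by
      apply mul_left_cancel₀ (hπtr z).ne'
      linear_combination h2
    rw [div_mul_eq_mul_div, eq_div_iff hTpos.ne']
    linear_combination h3
  have hsum : (∑ y', Real.exp (f y' x)) = (S / T) * ∑ y', πt y' * p x y' := by
    rw [Finset.mul_sum]
    exact Finset.sum_congr rfl fun z _ => key z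
  rw [key y, hsum]
  rw [mul_div_mul_left _ _ (div_pos hSpos hTpos).ne']
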